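/- arXiv:1509.08672 — 2 statements merged into one kernel-verified Lean document; each statement's English description precedes it below -/
import Mathlib

section
/- Suppose β ∈ (1,2) and there exist 0-1 words w = w₁...wₙ and w' = w'₁...w'ₙ' with w₁ ≠ w'₁ and a point y with g_w(y) = y and g_{w'}(y) = y (a 'double period' point). Then β is an algebraic integer: it is a root of a monic polynomial with integer coefficients. -/
/-!
Write `S_w(X) = Σ wᵢ X^{n-i}` for the digit polynomial of a word `w` of length `n`. Unfolding
the affine maps gives `g_w(y) = βⁿ y + (1 - β) S_w(β)`, so a common fixed point `y` of `g_w` and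
`g_{w'}` satisfies `(1 - β) S_w(β) = (1 - βⁿ) y` and `(1 - β) S_{w'}(β) = (1 - βᵐ) y`.
Eliminating `y` without dividing by `1 - β`, `β` is a root of
`(X - 1) ((Xᵐ - 1) S_w - (Xⁿ - 1) S_{w'})`. If `w` starts with `1` and `w'` with `0`, then `S_w`
is monic of degree `n - 1` while `S_{w'}` has degree `< m - 1`, so this polynomial is monic.
-/

/-- Composition g_w = g_{wₙ} ∘ ... ∘ g_{w₁} where each letter d ∈ {0,1} gives
the map x ↦ βx + d(1-β); the fold applies w₁ first. -/
def gword (β : ℝ) (w : List ℝ) (x : ℝ) : ℝ :=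
  w.foldl (fun y d => β * y + d * (1 - β)) x

open Polynomial

noncomputable def digitPoly : List ℤ → ℤ[X]
  | [] => 0
  | d :: l => C d * X ^ l.length + digitPoly l

@[simp]
lemma digitPoly_nil : digitPoly [] = 0 := rfl

lemma digitPoly_cons (d : ℤ) (l : List ℤ) :
    digitPoly (d :: l) = C d * X ^ l.length + digitPoly l := rfl

lemma degree_digitPoly_lt (l : List ℤ) : (digitPoly l).degree < l.length := by
  induction l with
  | nil => simp
  | cons d l ih =>
    rw [digitPoly_cons, List.length_cons]
    refine (degree_add_le _ _).trans_lt (max_lt ?_ (ih.trans (by norm_cast; omega)))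
    exact (degree_C_mul_X_pow_le _ _).trans_lt (by norm_cast; omega)

lemma degree_digitPoly_one_cons (l : List ℤ) : (digitPoly (1 :: l)).degree = l.length := by
  rw [digitPoly_cons, C_1, one_mul, degree_add_eq_left_of_degree_lt] <;>
    simp [degree_digitPoly_lt l]

lemma monic_digitPoly_one_cons (l : List ℤ) : (digitPoly (1 :: l)).Monic := by
  rw [digitPoly_cons, C_1, one_mul]
  exact (monic_X_pow _).add_of_left (by simpa using degree_digitPoly_lt l)

@[simp]
lemma digitPoly_zero_cons (l : List ℤ) : digitPoly (0 :: l) = digitPoly l := by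
  simp [digitPoly_cons]

lemma gword_cons (β d x : ℝ) (w : List ℝ) :
    gword β (d :: w) x = gword β w (β * x + d * (1 - β)) := rfl

lemma gword_map_intCast (β x : ℝ) (l : List ℤ) :
    gword β (l.map (↑)) x = β ^ l.length * x + (1 - β) * aeval β (digitPoly l) := by
  induction l generalizing x with
  | nil => simp [gword]
  | cons d l ih =>
    rw [List.map_cons, gword_cons, ih, digitPoly_cons]
    simp only [map_add, map_mul, eq_intCast, map_intCast, map_pow, aeval_X, List.length_cons]
    ring

lemma exists_map_intCast_eq {w : List ℝ} (hw : ∀ d ∈ w, ∃ k : ℤ, (k : ℝ) = d) :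
    ∃ l : List ℤ, l.map (↑) = w := by
  induction w with
  | nil => exact ⟨[], rfl⟩
  | cons d w ih =>
    obtain ⟨k, rfl⟩ := hw d List.mem_cons_self
    obtain ⟨l, rfl⟩ := ih fun e he => hw e (List.mem_cons_of_mem _ he)
    exact ⟨k :: l, rfl⟩

lemma isIntegral_of_gword_one_cons_zero_cons {β y : ℝ} (l l' : List ℤ)
    (hfix : gword β (1 :: l.map (↑)) y = y) (hfix' : gword β (0 :: l'.map (↑)) y = y) :
    IsIntegral ℤ β := by
  set n := l.length + 1
  set m := l'.length + 1
  set S := digitPoly (1 :: l)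
  set S' := digitPoly l'
  have hS : (1 - β) * aeval β S = (1 - β ^ n) * y := by
    have := gword_map_intCast β y (1 :: l)
    simp only [List.map_cons, Int.cast_one, hfix, List.length_cons] at this
    linear_combination -this
  have hS' : (1 - β) * aeval β S' = (1 - β ^ m) * y := by
    have := gword_map_intCast β y (0 :: l')
    simp only [List.map_cons, Int.cast_zero, hfix', List.length_cons, digitPoly_zero_cons] at this
    linear_combination -this
  have hmonic : ((X ^ m - 1) * S).Monic :=
    (monic_X_pow_sub_C 1 (by omega)).mul (monic_digitPoly_one_cons l)
  have hdeg : ((X ^ n - 1) * S').degree < ((X ^ m - 1) * S).degree := by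
    have hXn : (X ^ n - 1 : ℤ[X]).degree = n := by
      simpa using degree_X_pow_sub_C (by omega : 0 < n) (1 : ℤ)
    have hXm : (X ^ m - 1 : ℤ[X]).degree = m := by
      simpa using degree_X_pow_sub_C (by omega : 0 < m) (1 : ℤ)
    rw [degree_mul, degree_mul, hXn, hXm, degree_digitPoly_one_cons]
    calc (n : WithBot ℕ) + S'.degree < n + l'.length :=
          WithBot.add_lt_add_left (WithBot.coe_ne_bot) (degree_digitPoly_lt l')
      _ = m + l.length := by norm_cast; omega
  refine ⟨(X - 1) * ((X ^ m - 1) * S - (X ^ n - 1) * S'),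
    (monic_X_sub_C 1).mul (hmonic.sub_of_left hdeg), ?_⟩
  rw [← aeval_def]
  simp only [map_mul, map_sub, map_pow, aeval_X, map_one]
  linear_combination (1 - β ^ m) * hS - (1 - β ^ n) * hS'

theorem double_period_algebraic_integer_general (β : ℝ) (w w' : List ℝ) (y : ℝ)
    (hw : ∀ d ∈ w, d = 0 ∨ d = 1) (hw' : ∀ d ∈ w', d = 0 ∨ d = 1)
    (hne : w ≠ []) (hne' : w' ≠ [])
    (hfirst : w.headI ≠ w'.headI)
    (hfix : gword β w y = y) (hfix' : gword β w' y = y) :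
    IsIntegral ℤ β := by
  have hint : ∀ d : ℝ, d = 0 ∨ d = 1 → ∃ k : ℤ, (k : ℝ) = d := by
    rintro d (rfl | rfl)
    exacts [⟨0, Int.cast_zero⟩, ⟨1, Int.cast_one⟩]
  obtain ⟨a, t, rfl⟩ := List.exists_cons_of_ne_nil hne
  obtain ⟨a', t', rfl⟩ := List.exists_cons_of_ne_nil hne'
  obtain ⟨l, rfl⟩ := exists_map_intCast_eq fun d hd => hint d (hw d (List.mem_cons_of_mem _ hd))
  obtain ⟨l', rfl⟩ :=
    exists_map_intCast_eq fun d hd => hint d (hw' d (List.mem_cons_of_mem _ hd))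
  rcases hw a List.mem_cons_self with rfl | rfl <;>
    rcases hw' a' List.mem_cons_self with rfl | rfl
  · exact absurd rfl hfirst
  · exact isIntegral_of_gword_one_cons_zero_cons l' l hfix' hfix
  · exact isIntegral_of_gword_one_cons_zero_cons l l' hfix hfix'
  · exact absurd rfl hfirst

/-- a double period point forces β to be an algebraic integer. -/
theorem double_period_algebraic_integer (β : ℝ) (w w' : List ℝ) (y : ℝ)
    (hβ : 1 < β ∧ β < 2)
    (hw : ∀ d ∈ w, d = 0 ∨ d = 1) (hw' : ∀ d ∈ w', d = 0 ∨ d = 1)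
    (hne : w ≠ []) (hne' : w' ≠ [])
    (hfirst : w.headI ≠ w'.headI)
    (hfix : gword β w y = y) (hfix' : gword β w' y = y) :
    IsIntegral ℤ β :=
  double_period_algebraic_integer_general β w w' y hw hw' hne hne' hfirst hfix hfix'
end

section
/- Let b = .b₁b₂... < 1/2 be a binary number whose sequence is a kneading sequence (no shift of the sequence, as a binary number in [0,1], lies strictly between b and 1-b), and suppose b is periodic with period n: b = .(0b₂...bₙ) repeated. Let b' be the binary number with repeating period 0b₂...bₙ1(1-b₂)...(1-bₙ) (period 2n). Then b < b' < 1/2 and there is no kneading sequence c with b < c < b'. -/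
/-- Binary value of a 0-1 sequence (indexed from 0): .a₀a₁a₂... -/
noncomputable def binVal (a : ℕ → ℝ) : ℝ := ∑' k : ℕ, a k * (1/2) ^ (k + 1)

/-- A 0-1 sequence is kneading if it is not eventually constant and no shift
of it, as a binary number, lies strictly between b and 1-b, b = binVal a. -/
def IsKneading (a : ℕ → ℝ) : Prop :=
  (∀ k, a k = 0 ∨ a k = 1) ∧
  (¬ ∃ N : ℕ, ∀ k ≥ N, a k = a N) ∧
  (∀ j : ℕ, ¬ (binVal a < binVal (fun k => a (k + j)) ∧
               binVal (fun k => a (k + j)) < 1 - binVal a))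

lemma summable_half_pow : Summable (fun k : ℕ => ((1:ℝ)/2) ^ (k + 1)) := by
  have hg : Summable (fun k : ℕ => ((1:ℝ)/2) ^ k * ((1:ℝ)/2)) :=
    (summable_geometric_of_lt_one (by norm_num) (by norm_num)).mul_right _
  simpa [pow_succ] using hg

lemma summable_bin (s : ℕ → ℝ) (h01 : ∀ k, s k = 0 ∨ s k = 1) :
    Summable (fun k => s k * ((1:ℝ)/2) ^ (k + 1)) := by
  apply Summable.of_nonneg_of_le _ _ summable_half_pow
  · intro k; rcases h01 k with h | h <;> simp [h] <;> positivity
  · intro k; rcases h01 k with h | h <;> simp [h] <;> positivity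

lemma tsum_half_pow : ∑' k : ℕ, ((1:ℝ)/2) ^ (k + 1) = 1 := by
  have h : ∑' k : ℕ, ((1:ℝ)/2) ^ (k + 1) = (1/2) * ∑' k : ℕ, ((1:ℝ)/2) ^ k := by
    rw [← tsum_mul_left]
    exact tsum_congr fun k => by rw [pow_succ]; ring
  rw [h, tsum_geometric_of_lt_one (by norm_num) (by norm_num)]
  norm_num

lemma binVal_nonneg (s : ℕ → ℝ) (h01 : ∀ k, s k = 0 ∨ s k = 1) : 0 ≤ binVal s := by
  apply tsum_nonneg
  intro k; rcases h01 k with h | h <;> simp [h] <;> positivity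

lemma binVal_le_one (s : ℕ → ℝ) (h01 : ∀ k, s k = 0 ∨ s k = 1) : binVal s ≤ 1 := by
  have h := Summable.tsum_le_tsum (f := fun k => s k * ((1:ℝ)/2) ^ (k + 1))
    (g := fun k : ℕ => ((1:ℝ)/2) ^ (k + 1))
    (fun k => by rcases h01 k with h | h <;> simp [h] <;> positivity)
    (summable_bin s h01) summable_half_pow
  calc binVal s ≤ ∑' k : ℕ, ((1:ℝ)/2) ^ (k + 1) := h
    _ = 1 := tsum_half_pow

lemma binVal_shift (s : ℕ → ℝ) (h01 : ∀ k, s k = 0 ∨ s k = 1) (m : ℕ) :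
    binVal s = (∑ i ∈ Finset.range m, s i * ((1:ℝ)/2) ^ (i + 1))
      + ((1:ℝ)/2) ^ m * binVal (fun j => s (j + m)) := by
  unfold binVal
  rw [← Summable.sum_add_tsum_nat_add m (summable_bin s h01)]
  congr 1
  rw [← tsum_mul_left]
  exact tsum_congr fun j => by ring

lemma binVal_ge_half (s : ℕ → ℝ) (h01 : ∀ k, s k = 0 ∨ s k = 1) (h : s 0 = 1) :
    1/2 ≤ binVal s := by
  have hs := binVal_shift s h01 1
  rw [Finset.sum_range_one, h] at hs
  have h0 : 0 ≤ binVal (fun j => s (j + 1)) := binVal_nonneg _ (fun j => h01 _)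
  rw [hs]; norm_num; linarith

lemma binVal_le_half (s : ℕ → ℝ) (h01 : ∀ k, s k = 0 ∨ s k = 1) (h : s 0 = 0) :
    binVal s ≤ 1/2 := by
  have hs := binVal_shift s h01 1
  rw [Finset.sum_range_one, h] at hs
  have h0 : binVal (fun j => s (j + 1)) ≤ 1 := binVal_le_one _ (fun j => h01 _)
  rw [hs]; norm_num; linarith

lemma binVal_periodic (s : ℕ → ℝ) (h01 : ∀ k, s k = 0 ∨ s k = 1) (p : ℕ)
    (hper : ∀ k, s (k + p) = s k) :
    binVal s * (1 - ((1:ℝ)/2) ^ p) = ∑ i ∈ Finset.range p, s i * ((1:ℝ)/2) ^ (i + 1) := by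
  have h := binVal_shift s h01 p
  have he : (fun j => s (j + p)) = s := funext hper
  rw [he] at h
  linear_combination h

lemma sum_half_pow (n : ℕ) : ∑ i ∈ Finset.range n, ((1:ℝ)/2) ^ (i + 1) = 1 - ((1:ℝ)/2) ^ n := by
  induction n with
  | zero => simp
  | succ n ih => rw [Finset.sum_range_succ, ih]; ring

lemma digits_agree (n : ℕ) (u v s : ℕ → ℝ)
    (hu : ∀ k, u k = 0 ∨ u k = 1) (hv : ∀ k, v k = 0 ∨ v k = 1)
    (hs : ∀ k, s k = 0 ∨ s k = 1)
    (huv : ∀ k, k < n → u k = v k)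
    (h1 : binVal u < binVal s) (h2 : binVal s < binVal v) :
    ∀ k, k < n → s k = u k := by
  intro k
  induction k using Nat.strong_induction_on with
  | _ k ih =>
    intro hk
    have hSs := binVal_shift s hs k
    have hSu := binVal_shift u hu k
    have hSv := binVal_shift v hv k
    have hes : ∑ i ∈ Finset.range k, s i * ((1:ℝ)/2) ^ (i + 1)
        = ∑ i ∈ Finset.range k, u i * ((1:ℝ)/2) ^ (i + 1) :=
      Finset.sum_congr rfl (fun i hi => by
        rw [ih i (Finset.mem_range.mp hi) (lt_trans (Finset.mem_range.mp hi) hk)])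
    have hev : ∑ i ∈ Finset.range k, v i * ((1:ℝ)/2) ^ (i + 1)
        = ∑ i ∈ Finset.range k, u i * ((1:ℝ)/2) ^ (i + 1) :=
      Finset.sum_congr rfl (fun i hi => by
        rw [huv i (lt_trans (Finset.mem_range.mp hi) hk)])
    rw [hes] at hSs
    rw [hev] at hSv
    have hpk : (0:ℝ) < ((1:ℝ)/2) ^ k := by positivity
    have hlt1 : binVal (fun j => u (j + k)) < binVal (fun j => s (j + k)) := by
      have hh : ((1:ℝ)/2) ^ k * binVal (fun j => u (j + k))
          < ((1:ℝ)/2) ^ k * binVal (fun j => s (j + k)) := by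
        rw [hSu, hSs] at h1; linarith
      exact lt_of_mul_lt_mul_left hh hpk.le
    have hlt2 : binVal (fun j => s (j + k)) < binVal (fun j => v (j + k)) := by
      have hh : ((1:ℝ)/2) ^ k * binVal (fun j => s (j + k))
          < ((1:ℝ)/2) ^ k * binVal (fun j => v (j + k)) := by
        rw [hSs, hSv] at h2; linarith
      exact lt_of_mul_lt_mul_left hh hpk.le
    rcases hu k with h0 | h1'
    · have hvk : v k = 0 := by rw [← huv k hk]; exact h0
      have hhalfv : binVal (fun j => v (j + k)) ≤ 1/2 :=
        binVal_le_half _ (fun j => hv _) (by simpa using hvk)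
      rcases hs k with h | h
      · rw [h, h0]
      · exfalso
        have : 1/2 ≤ binVal (fun j => s (j + k)) :=
          binVal_ge_half _ (fun j => hs _) (by simpa using h)
        linarith
    · have hhalfu : 1/2 ≤ binVal (fun j => u (j + k)) :=
        binVal_ge_half _ (fun j => hu _) (by simpa using h1')
      rcases hs k with h | h
      · exfalso
        have : binVal (fun j => s (j + k)) ≤ 1/2 :=
          binVal_le_half _ (fun j => hs _) (by simpa using h)
        linarith
      · rw [h, h1']

/-- period-doubling lemma: between a periodic kneading
sequence b (period word 0b₂...bₙ) and its period-doubling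
b' = .(0b₂...bₙ1(1-b₂)...(1-bₙ)) there is no kneading sequence. -/
theorem period_doubling_gap (n : ℕ) (hn : 0 < n) (a : ℕ → ℝ)
    (ha01 : ∀ k, a k = 0 ∨ a k = 1)
    (ha0 : a 0 = 0)
    (hper : ∀ k, a (k + n) = a k)
    (hknead : IsKneading a)
    (hpos : 0 < binVal a) (hhalf : binVal a < 1/2) :
    binVal a < binVal (fun k => if k % (2*n) < n then a (k % (2*n))
                                else 1 - a (k % (2*n) - n)) ∧
    binVal (fun k => if k % (2*n) < n then a (k % (2*n))
                     else 1 - a (k % (2*n) - n)) < 1/2 ∧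
    ∀ c : ℕ → ℝ, IsKneading c →
      ¬ (binVal a < binVal c ∧
         binVal c < binVal (fun k => if k % (2*n) < n then a (k % (2*n))
                                     else 1 - a (k % (2*n) - n))) := by
  set d : ℕ → ℝ := fun k => if k % (2*n) < n then a (k % (2*n))
      else 1 - a (k % (2*n) - n) with hd
  have hd01 : ∀ k, d k = 0 ∨ d k = 1 := by
    intro k
    by_cases h : k % (2*n) < n
    · simpa [hd, h] using ha01 (k % (2*n))
    · rcases ha01 (k % (2*n) - n) with h0 | h0 <;> simp [hd, h, h0]
  have h2n : 0 < 2 * n := by omega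
  have hdper : ∀ k, d (k + 2*n) = d k := by
    intro k; simp [hd, Nat.add_mod_right]
  have hdagree : ∀ k, k < n → d k = a k := by
    intro k hk
    have hm : k % (2*n) = k := Nat.mod_eq_of_lt (by omega)
    simp [hd, hm, hk]
  have hdsecond : ∀ i, i < n → d (n + i) = 1 - a i := by
    intro i hi
    have hm : (n + i) % (2*n) = n + i := Nat.mod_eq_of_lt (by omega)
    have h2 : ¬ (n + i < n) := by omega
    simp [hd, hm, h2]
  set b := binVal a with hb
  set b' := binVal d with hb'
  set t := ((1:ℝ)/2) ^ n with ht
  set V := ∑ i ∈ Finset.range n, a i * ((1:ℝ)/2) ^ (i + 1) with hV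
  have ht0 : 0 < t := by positivity
  have ht1 : t < 1 := pow_lt_one₀ (by norm_num) (by norm_num) hn.ne'
  have hbV : b * (1 - t) = V := binVal_periodic a ha01 n hper
  have hV0 : 0 ≤ V := Finset.sum_nonneg (fun i _ => by
    rcases ha01 i with h | h <;> simp [h] <;> positivity)
  have hsum2n : ∑ i ∈ Finset.range (2*n), d i * ((1:ℝ)/2) ^ (i + 1)
      = V + t * ((1 - t) - V) := by
    rw [two_mul, Finset.sum_range_add]
    have e1 : ∑ i ∈ Finset.range n, d i * ((1:ℝ)/2) ^ (i + 1) = V :=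
      Finset.sum_congr rfl (fun i hi => by rw [hdagree i (Finset.mem_range.mp hi)])
    have e2 : ∑ i ∈ Finset.range n, d (n + i) * ((1:ℝ)/2) ^ (n + i + 1)
        = t * ((1 - t) - V) := by
      have hcong : ∀ i ∈ Finset.range n, d (n + i) * ((1:ℝ)/2) ^ (n + i + 1)
          = t * (((1:ℝ)/2) ^ (i + 1) - a i * ((1:ℝ)/2) ^ (i + 1)) := by
        intro i hi
        rw [hdsecond i (Finset.mem_range.mp hi), ht]
        ring
      rw [Finset.sum_congr rfl hcong, ← Finset.mul_sum, Finset.sum_sub_distrib, sum_half_pow]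
    rw [e1, e2]
  have hQ : b' * (1 - t^2) = V + t * ((1 - t) - V) := by
    have h := binVal_periodic d hd01 (2*n) hdper
    rwa [show ((1:ℝ)/2) ^ (2*n) = t^2 by rw [ht, ← pow_mul, mul_comm], hsum2n] at h
  have hb'eq : b' * (1 + t) = V + t := by
    have h1 : b' * (1 + t) * (1 - t) = (V + t) * (1 - t) := by linear_combination hQ
    have hne : (1:ℝ) - t ≠ 0 := ne_of_gt (by linarith)
    exact mul_right_cancel₀ hne h1
  have goal1 : b < b' := by
    have h1 : b * (1 + t) < b' * (1 + t) := by
      nlinarith [mul_pos ht0 (show (0:ℝ) < 1 - 2*b by linarith)]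
    exact lt_of_mul_lt_mul_right h1 (by linarith)
  have goal2 : b' < 1/2 := by
    have h1 : b' * (1 + t) < (1/2) * (1 + t) := by
      nlinarith [mul_pos ht0 (show (0:ℝ) < 1 - 2*b by linarith)]
    exact lt_of_mul_lt_mul_right h1 (by linarith)
  refine ⟨goal1, goal2, ?_⟩
  rintro c hc ⟨hbc, hcb'⟩
  obtain ⟨hc01, hcne, hcknead⟩ := hc
  have haq : ∀ q r, a (r + q * n) = a r := by
    intro q
    induction q with
    | zero => simp
    | succ q ih =>
      intro r
      have he : r + (q+1) * n = (r + q * n) + n := by ring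
      rw [he, hper, ih]
  -- key induction
  have key : ∀ m : ℕ, b < binVal (fun k => c (k + m * n)) ∧
      binVal (fun k => c (k + m * n)) ≤ binVal c := by
    intro m
    induction m with
    | zero =>
      constructor
      · simpa using hbc
      · simp
    | succ m ih =>
      obtain ⟨h1, h2⟩ := ih
      have hs01 : ∀ k, (fun k => c (k + m * n)) k = 0 ∨ (fun k => c (k + m * n)) k = 1 :=
        fun k => hc01 _
      have hsv : binVal (fun k => c (k + m * n)) < b' := lt_of_le_of_lt h2 hcb'
      have hdig : ∀ k, k < n → (fun k => c (k + m * n)) k = a k :=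
        digits_agree n a d (fun k => c (k + m * n)) ha01 hd01 hs01
          (fun k hk => (hdagree k hk).symm) h1 hsv
      have hshift := binVal_shift (fun k => c (k + m * n)) hs01 n
      have hVs : ∑ i ∈ Finset.range n, (fun k => c (k + m * n)) i * ((1:ℝ)/2) ^ (i + 1) = V := by
        rw [hV]
        exact Finset.sum_congr rfl (fun i hi => by
          rw [hdig i (Finset.mem_range.mp hi)])
      have hfun : (fun j => (fun k => c (k + m * n)) (j + n)) = (fun k => c (k + (m+1) * n)) := by
        funext j
        simp only []
        congr 1
        ring
      rw [hVs, hfun, ← ht] at hshift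
      set x := binVal (fun k => c (k + (m+1) * n)) with hx
      have hx01 : ∀ k, (fun k => c (k + (m+1) * n)) k = 0 ∨ (fun k => c (k + (m+1) * n)) k = 1 :=
        fun k => hc01 _
      -- lower bound
      have hlow : b < x := by
        have hh : t * b < t * x := by nlinarith
        exact lt_of_mul_lt_mul_left hh ht0.le
      -- upper bound
      have hup : x < 1 - b' := by
        have hh : t * x < t * (1 - b') := by nlinarith
        exact lt_of_mul_lt_mul_left hh ht0.le
      have hup2 : x < 1 - binVal c := by linarith
      have hk := hcknead ((m+1) * n)
      have hle : x ≤ binVal c := by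
        by_contra hlt
        exact hk ⟨lt_of_not_ge hlt, hup2⟩
      exact ⟨hlow, hle⟩
  -- conclude c = a
  have hceq : ∀ k, c k = a k := by
    intro k
    obtain ⟨h1, h2⟩ := key (k / n)
    have hdig : ∀ j, j < n → (fun j => c (j + (k / n) * n)) j = a j :=
      digits_agree n a d (fun j => c (j + (k / n) * n)) ha01 hd01 (fun j => hc01 _)
        (fun j hj => (hdagree j hj).symm) h1 (lt_of_le_of_lt h2 hcb')
    have hr : k % n < n := Nat.mod_lt _ hn
    have h5 : c (k % n + (k / n) * n) = a (k % n) := hdig (k % n) hr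
    have hk : k % n + (k / n) * n = k := by
      rw [mul_comm]; exact Nat.mod_add_div k n
    rw [hk] at h5
    rw [h5]
    have := haq (k / n) (k % n)
    rw [hk] at this
    rw [← this]
  have hcb : binVal c = b := by
    rw [hb]; unfold binVal; exact tsum_congr fun k => by rw [hceq k]
  linarith
end
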